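/- arXiv:1111.0379 — 2 statements merged into one kernel-verified Lean document; each statement's English description precedes it below -/
import Mathlib

section
/- For 0 < r₁ < r₂ < 1/2, the LSH exponent ρ = ln(1 - r₁)/ln(1 - r₂) satisfies ρ < r₁/r₂, and as r₂ → 1/2 with r₁ fixed, ρ → ln(1-r₁)/ln(1/2) = -log₂(1-r₁) ≤ 2r₁ for r₁ ≤ 1/2. -/
/-- for 0 < r₁ < r₂ < 1/2 the LSH exponent ρ = ln(1-r₁)/ln(1-r₂) satisfies
ρ < r₁/r₂; as r₂ → 1/2⁻ (r₁ fixed) it tends to ln(1-r₁)/ln(1/2) = -log₂(1-r₁), which is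
at most 2r₁ for r₁ ≤ 1/2. -/
theorem lsh_exponent_bounds (r₁ : ℝ) (h1 : 0 < r₁) (h2 : r₁ ≤ 1/2) :
    (∀ r₂, r₁ < r₂ → r₂ < 1/2 → Real.log (1-r₁)/Real.log (1-r₂) < r₁/r₂) ∧
    Filter.Tendsto (fun r₂ => Real.log (1-r₁)/Real.log (1-r₂))
      (nhdsWithin (1/2) (Set.Iio (1/2))) (nhds (Real.log (1-r₁)/Real.log (1/2))) ∧
    Real.log (1-r₁)/Real.log (1/2) = -Real.logb 2 (1-r₁) ∧
    Real.log (1-r₁)/Real.log (1/2) ≤ 2*r₁ := by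
  refine ⟨?_, ?_, ?_, ?_⟩
  · intro r₂ hr12 hr2
    have h1r2 : (0:ℝ) < 1 - r₂ := by linarith
    have hr2pos : (0:ℝ) < r₂ := lt_trans h1 hr12
    have key := strictConcaveOn_log_Ioi.2 (Set.mem_Ioi.mpr one_pos)
      (Set.mem_Ioi.mpr h1r2) (by intro h; rw [← h] at h1r2; linarith)
      (show (0:ℝ) < 1 - r₁/r₂ by
        have : r₁/r₂ < 1 := (div_lt_one hr2pos).mpr hr12
        linarith)
      (show (0:ℝ) < r₁/r₂ from div_pos h1 hr2pos)
      (by ring)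
    rw [smul_eq_mul, smul_eq_mul, smul_eq_mul, smul_eq_mul, Real.log_one] at key
    have heq : (1 - r₁/r₂) * 1 + r₁/r₂ * (1 - r₂) = 1 - r₁ := by
      field_simp
      ring
    rw [heq] at key
    have hlogneg : Real.log (1 - r₂) < 0 :=
      Real.log_neg h1r2 (by linarith)
    rw [div_lt_iff_of_neg hlogneg]
    linarith
  · have hcont : ContinuousAt (fun r₂ => Real.log (1-r₁)/Real.log (1-r₂)) (1/2 : ℝ) := by
      apply ContinuousAt.div continuousAt_const
      · exact (Real.continuousAt_log (by norm_num)).comp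
          ((continuous_const.sub continuous_id).continuousAt)
      · have : Real.log (1 - (1/2 : ℝ)) < 0 := Real.log_neg (by norm_num) (by norm_num)
        exact ne_of_lt this
    have := hcont.continuousWithinAt (s := Set.Iio (1/2 : ℝ))
    have h := this.tendsto
    norm_num at h ⊢
    exact h
  · rw [Real.logb, show (1/2 : ℝ) = 2⁻¹ by norm_num, Real.log_inv, div_neg]
  · have key := strictConcaveOn_log_Ioi.concaveOn.2 (Set.mem_Ioi.mpr one_pos)
      (Set.mem_Ioi.mpr (show (0:ℝ) < 1/2 by norm_num))
      (show (0:ℝ) ≤ 1 - 2*r₁ by linarith)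
      (show (0:ℝ) ≤ 2*r₁ by linarith)
      (by ring)
    rw [smul_eq_mul, smul_eq_mul, smul_eq_mul, smul_eq_mul, Real.log_one] at key
    have heq : (1 - 2*r₁) * 1 + 2*r₁ * (1/2 : ℝ) = 1 - r₁ := by ring
    rw [heq] at key
    have hlogneg : Real.log (1/2 : ℝ) < 0 := Real.log_neg (by norm_num) (by norm_num)
    rw [div_le_iff_of_neg hlogneg]
    linarith
end

section
/- For p_g ∈ (0, 1/8), the exponent 2 - (1-2p_g)³(1-2p_err)² with p_err bounded by the Fitch bound 1/2 - sqrt((1-4p_g)(1-8p_g))/(2(1-2p_g)²) satisfies 2 - (1-2p_g)³(1-2p_err)² ≤ 2 - (1-2p_g)³·(1-4p_g)(1-8p_g)/(1-2p_g)⁴ < 2, i.e., the runtime exponent of the algorithm is strictly less than 2 for all p_g < 1/8. -/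
/-! The Fitch bound is exactly the value of `p_err` at which `(1 - 2 p_err)²` equals
`(1-4p)(1-8p)/(1-2p)⁴`, and `(1 - 2 p_err)²` grows as `p_err` moves below it. The remaining
exponent stays below `2` because `(1-4p)(1-8p)` is positive for `p < 1/8`. -/

lemma div_sq_le_sq_of_sqrt_div_le {x d y : ℝ} (hd : 0 < d) (h : √x / d ≤ y) :
    x / d ^ 2 ≤ y ^ 2 := by
  obtain ⟨-, hx⟩ := Real.sqrt_le_iff.mp ((div_le_iff₀ hd).mp h)
  rw [div_le_iff₀ (by positivity)]
  linarith

lemma one_sub_four_mul_mul_one_sub_eight_mul_pos {p : ℝ} (hp : p < 1 / 8) :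
    0 < (1 - 4 * p) * (1 - 8 * p) :=
  mul_pos (by linarith) (by linarith)

lemma fitch_ratio_le_sq {p perr : ℝ} (hp : p < 1 / 8)
    (hpe : perr ≤ 1/2 - Real.sqrt ((1-4*p)*(1-8*p))/(2*(1-2*p)^2)) :
    (1-4*p)*(1-8*p)/(1-2*p)^4 ≤ (1-2*perr)^2 := by
  have hd : 0 < (1 - 2 * p) ^ 2 := pow_pos (by linarith) 2
  have hsqrt : √((1-4*p)*(1-8*p)) / (1-2*p)^2 ≤ 1 - 2*perr := by
    rw [div_mul_eq_div_div_swap] at hpe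
    linarith
  simpa only [← pow_mul] using div_sq_le_sq_of_sqrt_div_le hd hsqrt

theorem runtime_exponent_lt_two_general
    (p perr : ℝ) (hp : p < 1/8)
    (hpe : perr ≤ 1/2 - Real.sqrt ((1-4*p)*(1-8*p))/(2*(1-2*p)^2)) :
    2 - (1-2*p)^3*(1-2*perr)^2 ≤ 2 - (1-2*p)^3*((1-4*p)*(1-8*p)/(1-2*p)^4) ∧
    2 - (1-2*p)^3*((1-4*p)*(1-8*p)/(1-2*p)^4) < 2 := by
  have h2p : 0 < 1 - 2 * p := by linarith
  refine ⟨sub_le_sub_left ?_ 2, sub_lt_self 2 ?_⟩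
  · exact mul_le_mul_of_nonneg_left (fitch_ratio_le_sq hp hpe) (pow_nonneg h2p.le 3)
  · exact mul_pos (pow_pos h2p 3)
      (div_pos (one_sub_four_mul_mul_one_sub_eight_mul_pos hp) (pow_pos h2p 4))

/-- the runtime exponent 2 - (1-2p_g)³(1-2p_err)² with p_err bounded by the
Fitch bound is at most 2 - (1-2p_g)³(1-4p_g)(1-8p_g)/(1-2p_g)⁴, which is strictly less
than 2 for all p_g ∈ (0,1/8). -/
theorem runtime_exponent_lt_two
    (p perr : ℝ) (hp0 : 0 < p) (hp : p < 1/8) (hpe0 : 0 ≤ perr)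
    (hpe : perr ≤ 1/2 - Real.sqrt ((1-4*p)*(1-8*p))/(2*(1-2*p)^2)) :
    2 - (1-2*p)^3*(1-2*perr)^2 ≤ 2 - (1-2*p)^3*((1-4*p)*(1-8*p)/(1-2*p)^4) ∧
    2 - (1-2*p)^3*((1-4*p)*(1-8*p)/(1-2*p)^4) < 2 :=
  runtime_exponent_lt_two_general p perr hp hpe
end
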